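/- For all p, q ∈ ℂ with q ≠ 0 and p ≠ q: if L and L′ are complex Lie algebras admitting bases realizing the bracket patterns d₅(p,0,q) and d₅(p,p,q) respectively, then L and L′ are isomorphic as Lie algebras over ℂ. -/

import Mathlib

/-- `Realizes L c` means that the complex Lie algebra `L` admits a basis `e₁, …, e₅`
(indexed by `Fin 5`) in which the brackets of basis vectors are given by the
structure constants `c`, i.e. `⁅eᵢ, eⱼ⁆ = ∑ₖ c i j k • eₖ` for all `i < j`,
all brackets of basis vectors being determined by these via antisymmetry. -/
def Realizes (L : Type) [LieRing L] [LieAlgebra ℂ L]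
    (c : Fin 5 → Fin 5 → Fin 5 → ℂ) : Prop :=
  ∃ e : Module.Basis (Fin 5) ℂ L, ∀ i j : Fin 5, i < j →
    ⁅e i, e j⁆ = ∑ k, c i j k • e k

/-- The bracket pattern `d₅(p,q,r)` (indices shifted down by one so the basis is indexed by `Fin 5`): `[e₂,e₄]=e₁+p·e₂`, `[e₃,e₄]=e₂+q·e₃`, `[e₁,e₅]=p(q−r)·e₁`, `[e₂,e₅]=(r−q)·e₁`, `[e₃,e₅]=e₁+r·e₂−r(p−q)·e₃`, all other brackets zero. -/
def d5 (p q r : ℂ) : Fin 5 → Fin 5 → Fin 5 → ℂ := fun i j =>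
  if i = 1 ∧ j = 3 then ![1, p, 0, 0, 0]
  else if i = 2 ∧ j = 3 then ![0, 1, q, 0, 0]
  else if i = 0 ∧ j = 4 then ![p * (q - r), 0, 0, 0, 0]
  else if i = 1 ∧ j = 4 then ![r - q, 0, 0, 0, 0]
  else if i = 2 ∧ j = 4 then ![1, r, -(r * (p - q)), 0, 0]
  else 0

/-! A Lie algebra with a given basis is determined by its structure constants: the linear map
matching two bases with the same structure constants preserves brackets by bilinearity. So it
suffices to find, in a Lie algebra realizing `d₅(p,p,q)`, a basis whose brackets follow
`d₅(p,0,q)`. One is obtained by exchanging the rescaled derivations `e₄, e₅` and replacing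
`e₁, e₂, e₃` by `e₁ + p e₂, -e₂, -q⁻¹ e₂ + (q - p)/q · e₃`; this change of basis has
determinant `1`. -/

section StructureConstants

variable {R ι L L' : Type*} [CommRing R] [LieRing L] [LieAlgebra R L] [LieRing L']
  [LieAlgebra R L']

theorem LinearMap.map_lie_of_basis (f : L →ₗ[R] L') (e : Module.Basis ι R L)
    (h : ∀ i j, f ⁅e i, e j⁆ = ⁅f (e i), f (e j)⁆) (x y : L) : f ⁅x, y⁆ = ⁅f x, f y⁆ := by
  have : (LieAlgebra.ad R L : L →ₗ[R] Module.End R L).compr₂ f =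
      (LieAlgebra.ad R L' : L' →ₗ[R] Module.End R L').compl₁₂ f f :=
    LinearMap.ext_basis e e h
  exact LinearMap.congr_fun₂ this x y

variable [LinearOrder ι] [Fintype ι]

def antisymmStructureConstants (c : ι → ι → ι → R) (i j k : ι) : R :=
  if i < j then c i j k else if j < i then -c j i k else 0

theorem lie_basis_eq_sum_antisymm {e : Module.Basis ι R L} {c : ι → ι → ι → R}
    (he : ∀ i j, i < j → ⁅e i, e j⁆ = ∑ k, c i j k • e k) (i j : ι) :
    ⁅e i, e j⁆ = ∑ k, antisymmStructureConstants c i j k • e k := by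
  unfold antisymmStructureConstants
  rcases lt_trichotomy i j with hij | rfl | hij
  · simp [hij, he i j hij]
  · simp
  · rw [← lie_skew, he j i hij]
    simp [hij, hij.not_gt, Finset.sum_neg_distrib]

noncomputable def lieEquivOfStructureConstants (e : Module.Basis ι R L)
    (e' : Module.Basis ι R L') (c : ι → ι → ι → R)
    (he : ∀ i j, i < j → ⁅e i, e j⁆ = ∑ k, c i j k • e k)
    (he' : ∀ i j, i < j → ⁅e' i, e' j⁆ = ∑ k, c i j k • e' k) : L ≃ₗ⁅R⁆ L' :=
  { e.equiv e' (Equiv.refl ι) with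
    map_lie' := fun {x y} => LinearMap.map_lie_of_basis (e.equiv e' (Equiv.refl ι)).toLinearMap e
      (fun i j => by simp [lie_basis_eq_sum_antisymm he, lie_basis_eq_sum_antisymm he']) x y }

end StructureConstants

theorem Realizes.nonempty_lieEquiv {L L' : Type} [LieRing L] [LieAlgebra ℂ L] [LieRing L']
    [LieAlgebra ℂ L'] {c : Fin 5 → Fin 5 → Fin 5 → ℂ} (hL : Realizes L c) (hL' : Realizes L' c) :
    Nonempty (L ≃ₗ⁅ℂ⁆ L') :=
  let ⟨e, he⟩ := hL
  let ⟨e', he'⟩ := hL'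
  ⟨lieEquivOfStructureConstants e e' c he he'⟩

theorem realizes_d5_zero_of_realizes_d5_self {L : Type} [LieRing L] [LieAlgebra ℂ L] {p q : ℂ}
    (hq : q ≠ 0) (hpq : p ≠ q) (hL : Realizes L (d5 p p q)) : Realizes L (d5 p 0 q) := by
  obtain ⟨e, he⟩ := hL
  have hpq' : p - q ≠ 0 := sub_ne_zero.mpr hpq
  set v : Fin 5 → L :=
    ![e 0 + p • e 1, -e 1, (-q⁻¹) • e 1 + ((q - p) / q) • e 2, (p - q)⁻¹ • e 4, (-q) • e 3]
  have hdet : e.det v = 1 := by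
    have hdet_block : -((q - p) / q * ((p - q)⁻¹ * q)) = 1 := by
      field_simp
      ring
    rw [Module.Basis.det_apply, Matrix.det_succ_column_zero]
    simpa [v, Fin.sum_univ_succ, Matrix.det_succ_column_zero, Module.Basis.toMatrix_apply,
      Finsupp.single_apply, Fin.succAbove] using hdet_block
  obtain ⟨hli, hspan⟩ := e.is_basis_iff_det.2 (hdet ▸ isUnit_one)
  refine ⟨Module.Basis.mk hli hspan.ge, fun i j hij => ?_⟩
  simp only [Module.Basis.coe_mk]
  fin_cases i <;> fin_cases j <;> try exact absurd hij (by decide)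
  all_goals
    simp [v, lie_basis_eq_sum_antisymm he, antisymmStructureConstants, d5, Fin.sum_univ_five,
      smul_add, smul_smul, neg_smul] <;> match_scalars <;> field_simp <;> ring

/-- For `q ≠ 0` and `p ≠ q`, Lie algebras realizing the patterns `d₅(p,0,q)`
and `d₅(p,p,q)` are isomorphic. -/
theorem d5_p0q_iso_d5_ppq (p q : ℂ) (hq : q ≠ 0) (hpq : p ≠ q)
    (L L' : Type) [LieRing L] [LieAlgebra ℂ L] [LieRing L'] [LieAlgebra ℂ L']
    (hL : Realizes L (d5 p 0 q)) (hL' : Realizes L' (d5 p p q)) :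
    Nonempty (L ≃ₗ⁅ℂ⁆ L') :=
  hL.nonempty_lieEquiv (realizes_d5_zero_of_realizes_d5_self hq hpq hL')
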